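/- arXiv:2301.05643 — 3 statements merged into one kernel-verified Lean document; each statement's English description precedes it below -/
import Mathlib

section
/- Let χ be a complex character of a finite group G and let n be a positive integer such that every irreducible character of G is a constituent of χ^n. Then for every integer k ≥ n, every irreducible character of G is a constituent of χ^k. -/
open scoped ComplexOrder

noncomputable section

/-- `χ : G → ℂ` is the character of some finite-dimensional complex representation of `G`. -/
def IsChar (G : Type) [Group G] [Fintype G] (χ : G → ℂ) : Prop :=
  ∃ V : FDRep ℂ G, χ = V.character

/-- `χ : G → ℂ` is the character of some irreducible (simple) finite-dimensional complex
representation of `G`. -/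
def IsIrredChar (G : Type) [Group G] [Fintype G] (χ : G → ℂ) : Prop :=
  ∃ V : FDRep ℂ G, CategoryTheory.Simple V ∧ χ = V.character

/-- The usual inner product of class functions:
`⟨φ, ψ⟩ = |G|⁻¹ ∑ g, φ g * conj (ψ g)`. -/
def charInner (G : Type) [Group G] [Fintype G] (φ ψ : G → ℂ) : ℂ :=
  (Fintype.card G : ℂ)⁻¹ * ∑ g : G, φ g * (starRingEnd ℂ) (ψ g)

open Module Polynomial
open CategoryTheory MonoidalCategory

lemma aux_conj_trace {V : Type} [AddCommGroup V] [Module ℂ V] [FiniteDimensional ℂ V]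
    (A B : V →ₗ[ℂ] V) (hBA : B * A = 1) {m : ℕ} (hm : 0 < m) (hA : A ^ m = 1) :
    (starRingEnd ℂ) (LinearMap.trace ℂ V A) = LinearMap.trace ℂ V B := by
  set f : Module.End ℂ V := A with hf
  have hss : f.IsSemisimple := by
    apply Module.End.isSemisimple_of_squarefree_aeval_eq_zero
      (p := (X : ℂ[X]) ^ m - 1)
    · exact (Polynomial.X_pow_sub_one_separable_iff.mpr
        (by exact_mod_cast (Nat.cast_ne_zero (R := ℂ)).mpr hm.ne')).squarefree
    · simp [map_pow, hA]
  have hsup : ⨆ μ : ℂ, f.eigenspace μ = ⊤ := by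
    have h1 := Module.End.iSup_maxGenEigenspace_eq_top f
    simpa [hss.isFinitelySemisimple.maxGenEigenspace_eq_eigenspace] using h1
  have hint : DirectSum.IsInternal (fun μ : ℂ => f.eigenspace μ) :=
    DirectSum.isInternal_submodule_of_iSupIndep_of_iSup_eq_top f.eigenspaces_iSupIndep hsup
  have hfin : {μ : ℂ | f.eigenspace μ ≠ ⊥}.Finite := f.finite_hasEigenvalue
  -- basic facts about eigenvalues with nonzero eigenspace
  have key : ∀ μ : ℂ, f.eigenspace μ ≠ ⊥ → μ ^ m = 1 := by
    intro μ hμ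
    obtain ⟨x, hx, hx0⟩ := (Submodule.ne_bot_iff _).mp hμ
    have hev : A x = μ • x := Module.End.mem_eigenspace_iff.mp hx
    have hpow : ∀ i : ℕ, (A ^ i) x = μ ^ i • x := by
      intro i
      induction i with
      | zero => simp
      | succ i ih =>
        rw [pow_succ', pow_succ']
        simp only [Module.End.mul_apply]
        rw [ih, map_smul, hev, smul_smul, mul_comm]
    have hpow := hpow m
    rw [hA] at hpow
    have : (μ ^ m - 1) • x = 0 := by
      rw [sub_smul, one_smul, ← hpow]; simp
    exact sub_eq_zero.mp ((smul_eq_zero.mp this).resolve_right hx0)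
  have hmapsA : ∀ μ : ℂ, Set.MapsTo A (f.eigenspace μ) (f.eigenspace μ) := by
    intro μ x hx
    have hev : A x = μ • x := Module.End.mem_eigenspace_iff.mp hx
    exact Module.End.mem_eigenspace_iff.mpr (by rw [hev, map_smul, hev])
  have hBinv : ∀ x : V, B (A x) = x := fun x => by
    have := congrArg (fun (T : V →ₗ[ℂ] V) => T x) hBA
    simpa using this
  have hBev : ∀ (μ : ℂ), f.eigenspace μ ≠ ⊥ → ∀ x ∈ f.eigenspace μ, B x = μ⁻¹ • x := by
    intro μ hμ x hx
    have hμ0 : μ ≠ 0 := by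
      intro h0
      have := key μ hμ
      rw [h0, zero_pow hm.ne'] at this
      exact zero_ne_one this
    have hev : A x = μ • x := Module.End.mem_eigenspace_iff.mp hx
    have h2 : μ • B x = x := by
      rw [← map_smul, ← hev, hBinv]
    calc B x = μ⁻¹ • (μ • B x) := by rw [smul_smul, inv_mul_cancel₀ hμ0, one_smul]
    _ = μ⁻¹ • x := by rw [h2]
  have hmapsB : ∀ μ : ℂ, Set.MapsTo B (f.eigenspace μ) (f.eigenspace μ) := by
    intro μ x hx
    by_cases hμ : f.eigenspace μ = ⊥
    · rw [hμ] at hx ⊢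
      simp only [Submodule.bot_coe, Set.mem_singleton_iff] at hx ⊢
      rw [hx, map_zero]
    · rw [hBev μ hμ x hx]
      exact Submodule.smul_mem _ _ hx
  rw [LinearMap.trace_eq_sum_trace_restrict' hint hfin hmapsA,
      LinearMap.trace_eq_sum_trace_restrict' hint hfin hmapsB, map_sum]
  apply Finset.sum_congr rfl
  intro μ hμmem
  have hμ : f.eigenspace μ ≠ ⊥ := by simpa using (Set.Finite.mem_toFinset hfin).mp hμmem
  have hnorm : ‖μ‖ = 1 := by
    have h1 : ‖μ‖ ^ m = 1 := by
      rw [← norm_pow, key μ hμ, norm_one]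
    rcases pow_eq_one_iff_cases.mp h1 with h | h | h
    · exact absurd h hm.ne'
    · exact h
    · linarith [norm_nonneg μ, h.1]
  have hAres : A.restrict (hmapsA μ) = μ • (LinearMap.id : _ →ₗ[ℂ] _) := by
    ext x
    have : A (x : V) = μ • (x : V) := Module.End.mem_eigenspace_iff.mp x.2
    exact this
  have hBres : B.restrict (hmapsB μ) = μ⁻¹ • (LinearMap.id : _ →ₗ[ℂ] _) := by
    ext x
    exact hBev μ hμ (x : V) x.2
  have t1 : (LinearMap.trace ℂ (f.eigenspace μ)) (μ • (LinearMap.id : _ →ₗ[ℂ] _))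
      = μ * (finrank ℂ (f.eigenspace μ) : ℂ) := by
    rw [LinearMap.map_smul, LinearMap.trace_id, smul_eq_mul]
  have t2 : (LinearMap.trace ℂ (f.eigenspace μ)) (μ⁻¹ • (LinearMap.id : _ →ₗ[ℂ] _))
      = μ⁻¹ * (finrank ℂ (f.eigenspace μ) : ℂ) := by
    rw [LinearMap.map_smul, LinearMap.trace_id, smul_eq_mul]
  rw [hAres, hBres, t1, t2, map_mul, ← Complex.inv_eq_conj hnorm, map_natCast]

variable {G : Type} [Group G] [Fintype G]

lemma conj_character (V : FDRep ℂ G) (g : G) :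
    (starRingEnd ℂ) (V.character g) = V.character g⁻¹ := by
  have hBA : V.ρ g⁻¹ * V.ρ g = 1 := by
    rw [← map_mul, inv_mul_cancel, map_one]
  have hA : (V.ρ g) ^ (orderOf g) = 1 := by
    rw [← map_pow, pow_orderOf_eq_one, map_one]
  exact aux_conj_trace (V.ρ g) (V.ρ g⁻¹) hBA (orderOf_pos g) hA

lemma charInner_exists_nat (V W : FDRep ℂ G) :
    ∃ m : ℕ, charInner G V.character W.character = (m : ℂ) := by
  classical
  letI : Invertible ((Fintype.card G : ℂ)) :=
    invertibleOfNonzero (by exact_mod_cast Fintype.card_ne_zero)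
  refine ⟨Module.finrank ℂ
    (Representation.invariants (V ⊗ FDRep.of (Representation.dual W.ρ)).ρ), ?_⟩
  have havg := FDRep.average_char_eq_finrank_invariants
    (V ⊗ FDRep.of (Representation.dual W.ρ))
  rw [← havg]
  unfold charInner
  rw [Nat.card_eq_fintype_card]
  congr 1
  apply Finset.sum_congr rfl
  intro g _
  rw [FDRep.char_tensor]
  rw [Pi.mul_apply, FDRep.char_dual, conj_character]

/-- invariance of a submodule -/
def IsInvt (X : FDRep ℂ G) (p : Submodule ℂ X) : Prop := ∀ g : G, ∀ x ∈ p, X.ρ g x ∈ p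

/-- restricted representation -/
def subRepρ (X : FDRep ℂ G) (p : Submodule ℂ X) (hp : IsInvt X p) : Representation ℂ G p where
  toFun g := (X.ρ g).restrict (fun x hx => hp g x hx)
  map_one' := by
    ext x
    simp [LinearMap.restrict_apply]
  map_mul' g h := by
    ext x
    simp [LinearMap.restrict_apply, map_mul]

/-- sub representation -/
def subRep (X : FDRep ℂ G) (p : Submodule ℂ X) (hp : IsInvt X p) : FDRep ℂ G :=
  FDRep.of (subRepρ X p hp)

lemma subRep_char (X : FDRep ℂ G) (p : Submodule ℂ X) (hp : IsInvt X p) (g : G) :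
    (subRep X p hp).character g
      = LinearMap.trace ℂ p ((X.ρ g).restrict (fun x hx => hp g x hx)) := rfl

lemma exists_equivariant_compl (X : FDRep ℂ G) (p : Submodule ℂ X) (hp : IsInvt X p) :
    ∃ q : Submodule ℂ X, IsInvt X q ∧ IsCompl p q := by
  classical
  obtain ⟨c, hc⟩ := Submodule.exists_isCompl p
  set π₀ : X →ₗ[ℂ] p := p.projectionOnto c hc with hπ₀
  set π : X →ₗ[ℂ] p :=
    (Fintype.card G : ℂ)⁻¹ • ∑ g : G, (subRepρ X p hp g) ∘ₗ π₀ ∘ₗ (X.ρ g⁻¹) with hπ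
  have hπ_apply : ∀ x : X, π x =
      (Fintype.card G : ℂ)⁻¹ • ∑ g : G, (subRepρ X p hp g) (π₀ ((X.ρ g⁻¹) x)) := by
    intro x
    simp [hπ, LinearMap.sum_apply]
  have hfix : ∀ x ∈ p, (π x : X) = x := by
    intro x hx
    rw [hπ_apply]
    have : ∀ g : G, (subRepρ X p hp g) (π₀ ((X.ρ g⁻¹) x)) = ⟨x, hx⟩ := by
      intro g
      have h1 : (X.ρ g⁻¹) x ∈ p := hp g⁻¹ x hx
      have h2 : π₀ ((X.ρ g⁻¹) x) = ⟨(X.ρ g⁻¹) x, h1⟩ := by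
        rw [hπ₀, ← Submodule.projectionOnto_apply_left hc ⟨(X.ρ g⁻¹) x, h1⟩]
      rw [h2]
      apply Subtype.ext
      show (X.ρ g) ((X.ρ g⁻¹) x) = x
      rw [← Module.End.mul_apply, ← map_mul, mul_inv_cancel, map_one, Module.End.one_apply]
    rw [Finset.sum_congr rfl (fun g _ => this g)]
    rw [Finset.sum_const, Finset.card_univ]
    show (((Fintype.card G : ℂ)⁻¹ • Fintype.card G • (⟨x, hx⟩ : p) : p) : X) = x
    rw [← Nat.cast_smul_eq_nsmul ℂ, smul_smul,
      inv_mul_cancel₀ (by exact_mod_cast Fintype.card_ne_zero), one_smul]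
  have hequiv : ∀ (h : G) (x : X), π ((X.ρ h) x) = (subRepρ X p hp h) (π x) := by
    intro h x
    rw [hπ_apply, hπ_apply, map_smul, map_sum]
    congr 1
    apply Fintype.sum_equiv (Equiv.mulLeft h⁻¹)
    intro j
    simp only [Equiv.coe_mulLeft]
    have e0 : (h⁻¹ * j)⁻¹ = j⁻¹ * h := by group
    have e1 : (X.ρ j⁻¹) ((X.ρ h) x) = (X.ρ ((h⁻¹ * j)⁻¹)) x := by
      rw [← Module.End.mul_apply, ← map_mul, e0]
    have e2 : ∀ y : p, (subRepρ X p hp h) ((subRepρ X p hp (h⁻¹ * j)) y)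
        = (subRepρ X p hp j) y := by
      intro y
      rw [← Module.End.mul_apply, ← map_mul, mul_inv_cancel_left]
    rw [e1, e2]
  refine ⟨LinearMap.ker π, ?_, ?_⟩
  · intro g x hx
    rw [LinearMap.mem_ker] at hx ⊢
    rw [hequiv g x, hx, map_zero]
  · constructor
    · rw [disjoint_iff]
      ext x
      simp only [Submodule.mem_inf, Submodule.mem_bot, LinearMap.mem_ker]
      constructor
      · rintro ⟨hxp, hxk⟩
        have := hfix x hxp
        rw [hxk] at this
        simpa using this.symm
      · rintro rfl; simp
    · rw [codisjoint_iff, eq_top_iff]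
      intro x _
      have hdecomp : x = ((π x : X)) + (x - (π x : X)) := by abel
      have h1 : ((π x : X)) ∈ p := (π x).2
      have h2 : x - (π x : X) ∈ LinearMap.ker π := by
        rw [LinearMap.mem_ker, map_sub]
        have := hfix (π x : X) h1
        apply Subtype.ext
        show ((π x - π ((π x : X)) : p) : X) = (0 : X)
        push_cast
        rw [this]
        exact sub_self _
      rw [hdecomp]
      exact Submodule.add_mem_sup h1 h2

lemma fdrep_hom_comm (X Y : FDRep ℂ G) (f : X ⟶ Y) (g : G) (x : X) :
    f.hom (X.ρ g x) = Y.ρ g (f.hom x) := by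
  have h2 := LinearMap.ext_iff.mp (congrArg (fun φ => φ.hom.hom) (f.comm g)) x
  simp at h2
  exact h2

lemma simple_subRep (X : FDRep ℂ G) (p : Submodule ℂ X) (hp : IsInvt X p) (hbot : p ≠ ⊥)
    (hmin : ∀ r : Submodule ℂ X, IsInvt X r → r ≤ p → r = ⊥ ∨ r = p) :
    CategoryTheory.Simple (subRep X p hp) := by
  constructor
  intro Y f hmono
  constructor
  · intro hiso hf0
    apply hbot
    rw [Submodule.eq_bot_iff]
    intro y hy
    have h1 : (CategoryTheory.inv f ≫ f) = 𝟙 (subRep X p hp) := CategoryTheory.IsIso.inv_hom_id f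
    have h2 : f.hom ((CategoryTheory.inv f).hom ⟨y, hy⟩) = (⟨y, hy⟩ : p) :=
      LinearMap.ext_iff.mp (congrArg (fun φ => φ.hom.hom.hom) h1) ⟨y, hy⟩
    have hf0' : f.hom = 0 := congrArg Action.Hom.hom hf0
    rw [hf0'] at h2
    have h4 : (0 : p) = ⟨y, hy⟩ := h2
    simpa using (congrArg Subtype.val h4).symm
  · intro hf0
    -- f.hom is injective
    have hinj : Function.Injective f.hom := by
      rw [← LinearMap.ker_eq_bot]
      by_contra hker
      set K : Submodule ℂ Y := LinearMap.ker f.hom.hom.hom with hK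
      have hKinv : IsInvt Y K := by
        intro g x hx
        rw [hK, LinearMap.mem_ker] at hx ⊢
        have h5 := fdrep_hom_comm Y (subRep X p hp) f g x
        have h6 : ((subRep X p hp).ρ g) (f.hom x) = ((subRep X p hp).ρ g) 0 :=
          congrArg _ hx
        rw [map_zero] at h6
        exact h5.trans h6
      set ι : subRep Y K hKinv ⟶ Y :=
        ⟨FGModuleCat.ofHom K.subtype, fun g => by ext x; rfl⟩ with hι
      have hcomp : ι ≫ f = (0 : subRep Y K hKinv ⟶ Y) ≫ f := by
        apply Action.Hom.ext
        apply FGModuleCat.hom_ext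
        apply LinearMap.ext
        intro x
        show f.hom (K.subtype x) = f.hom 0
        rw [map_zero]
        exact LinearMap.mem_ker.mp x.2
      have hι0 : ι = 0 := (CategoryTheory.cancel_mono f).mp hcomp
      obtain ⟨y, hy, hy0⟩ := (Submodule.ne_bot_iff _).mp hker
      have : K.subtype ⟨y, hy⟩ = (0 : Y) := by
        have := LinearMap.ext_iff.mp (congrArg (fun φ => φ.hom.hom.hom) hι0) ⟨y, hy⟩
        exact this
      exact hy0 (by simpa using this)
    -- f.hom is surjective by minimality
    have hsurj : Function.Surjective f.hom := by
      set r : Submodule ℂ X := (LinearMap.range ((LinearMap.id : p →ₗ[ℂ] p) ∘ₗ f.hom.hom.hom)).map p.subtype with hr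
      have hrinv : IsInvt X r := by
        rintro g x hx
        rw [hr, Submodule.mem_map] at hx
        obtain ⟨z, hz, rfl⟩ := hx
        obtain ⟨y, rfl⟩ := hz
        rw [Submodule.mem_map]
        refine ⟨(subRepρ X p hp g) (f.hom y), ⟨Y.ρ g y, ?_⟩, rfl⟩
        exact fdrep_hom_comm Y (subRep X p hp) f g y
      have hrle : r ≤ p := by
        rw [hr]
        rintro x ⟨z, _, rfl⟩
        exact z.2
      rcases hmin r hrinv hrle with h0 | htop
      · exfalso
        apply hf0
        apply Action.Hom.ext
        apply FGModuleCat.hom_ext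
        apply LinearMap.ext
        intro y
        have hmem : p.subtype (f.hom y) ∈ r :=
          Submodule.mem_map_of_mem (LinearMap.mem_range_self _ y)
        rw [h0, Submodule.mem_bot] at hmem
        exact Subtype.ext hmem
      · intro z
        have hz : p.subtype z ∈ r := by rw [htop]; exact z.2
        rw [hr, Submodule.mem_map] at hz
        obtain ⟨w, hw, hwz⟩ := hz
        obtain ⟨y, rfl⟩ := hw
        exact ⟨y, Subtype.ext hwz⟩
    have hb : Function.Bijective f.hom := ⟨hinj, hsurj⟩
    set e := LinearEquiv.ofBijective f.hom.hom.hom hb with he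
    have h1 : ∀ w, f.hom (e.symm w) = w := fun w => e.apply_symm_apply w
    refine ⟨⟨⟨FGModuleCat.ofHom e.symm.toLinearMap, fun g => ?_⟩, ?_, ?_⟩⟩
    · apply FGModuleCat.hom_ext
      apply LinearMap.ext
      intro x
      show e.symm ((subRep X p hp).ρ g x) = Y.ρ g (e.symm x)
      apply hinj
      show f.hom (e.symm ((subRep X p hp).ρ g x)) = f.hom (Y.ρ g (e.symm x))
      rw [h1, fdrep_hom_comm Y (subRep X p hp) f g (e.symm x), h1]
    · apply Action.Hom.ext
      apply FGModuleCat.hom_ext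
      apply LinearMap.ext
      intro x
      show e.symm (f.hom x) = x
      exact e.symm_apply_apply x
    · apply Action.Hom.ext
      apply FGModuleCat.hom_ext
      apply LinearMap.ext
      intro x
      show f.hom (e.symm x) = x
      exact e.apply_symm_apply x

lemma char_eq_add_of_isCompl (X : FDRep ℂ G) (p q : Submodule ℂ X)
    (hp : IsInvt X p) (hq : IsInvt X q) (hc : IsCompl p q) (g : G) :
    X.character g = (subRep X p hp).character g + (subRep X q hq).character g := by
  classical
  set N : Bool → Submodule ℂ X := fun b => cond b p q with hN
  have hint : DirectSum.IsInternal N := by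
    rw [DirectSum.isInternal_submodule_iff_isCompl N (i := true) (j := false) (by simp)
      (by ext b; cases b <;> simp)]
    exact hc
  have hmaps : ∀ b, Set.MapsTo (X.ρ g) (N b) (N b) := by
    intro b
    cases b
    · exact fun x hx => hq g x hx
    · exact fun x hx => hp g x hx
  have htr := LinearMap.trace_eq_sum_trace_restrict hint hmaps
  have : X.character g = LinearMap.trace ℂ X (X.ρ g) := rfl
  rw [this, htr, Fintype.sum_bool]
  rfl

lemma exists_simple_decomp (X : FDRep ℂ G) (hX : 0 < Module.finrank ℂ X) :
    ∃ Y Z : FDRep ℂ G, CategoryTheory.Simple Y ∧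
      X.character = Y.character + Z.character := by
  classical
  have hnt : Nontrivial X := Module.finrank_pos_iff.mp hX
  have hexists : ∃ d : ℕ, ∃ p : Submodule ℂ X, IsInvt X p ∧ p ≠ ⊥ ∧ finrank ℂ p = d := by
    refine ⟨finrank ℂ X, ⊤, fun g x _ => trivial, ?_, ?_⟩
    · intro h
      obtain ⟨x, y, hxy⟩ := hnt
      apply hxy
      have hx : x ∈ (⊥ : Submodule ℂ X) := h ▸ Submodule.mem_top
      have hy : y ∈ (⊥ : Submodule ℂ X) := h ▸ Submodule.mem_top
      rw [Submodule.mem_bot] at hx hy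
      rw [hx, hy]
    · exact finrank_top ℂ X
  set d₀ := Nat.find hexists with hd₀
  obtain ⟨p, hpinv, hpbot, hpd⟩ := Nat.find_spec hexists
  have hmin : ∀ r : Submodule ℂ X, IsInvt X r → r ≤ p → r = ⊥ ∨ r = p := by
    intro r hrinv hrle
    by_cases hrbot : r = ⊥
    · exact Or.inl hrbot
    · right
      have h1 : d₀ ≤ finrank ℂ r := Nat.find_le ⟨r, hrinv, hrbot, rfl⟩
      apply Submodule.eq_of_le_of_finrank_le hrle
      rw [hpd]
      exact h1
  obtain ⟨q, hqinv, hqc⟩ := exists_equivariant_compl X p hpinv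
  refine ⟨subRep X p hpinv, subRep X q hqinv, simple_subRep X p hpinv hpbot hmin, ?_⟩
  funext g
  exact char_eq_add_of_isCompl X p q hpinv hqinv hqc g

lemma isChar_pow {χ : G → ℂ} (hχ : IsChar G χ) {k : ℕ} (hk : 0 < k) : IsChar G (χ ^ k) := by
  induction k with
  | zero => omega
  | succ i ih =>
    rcases Nat.eq_zero_or_pos i with h0 | hi
    · subst h0
      simpa [pow_one] using hχ
    · obtain ⟨U, hU⟩ := ih hi
      obtain ⟨V, hV⟩ := hχ
      exact ⟨U ⊗ V, by rw [FDRep.char_tensor, pow_succ, hU, hV]⟩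

lemma simple_finrank_pos (W : FDRep ℂ G) (hW : CategoryTheory.Simple W) :
    0 < finrank ℂ W := by
  by_contra hc
  push_neg at hc
  have h0 : finrank ℂ W = 0 := Nat.le_zero.mp hc
  haveI : Subsingleton W := Module.finrank_zero_iff.mp h0
  have hid : (𝟙 W : W ⟶ W) = 0 := by
    apply Action.Hom.ext
    apply FGModuleCat.hom_ext
    apply LinearMap.ext
    intro x
    exact @Subsingleton.elim W ‹_› _ _
  exact CategoryTheory.id_nonzero W hid

lemma char_zero_of_finrank_zero (V : FDRep ℂ G) (h0 : finrank ℂ V = 0) :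
    V.character = 0 := by
  haveI : Subsingleton V := Module.finrank_zero_iff.mp h0
  funext g
  have : V.ρ g = 0 := Subsingleton.elim _ _
  show LinearMap.trace ℂ V (V.ρ g) = 0
  rw [this, map_zero]

theorem constituents_pow_mono' (χ : G → ℂ) (hχ : IsChar G χ) (n : ℕ) (hn : 0 < n)
    (h : ∀ θ : G → ℂ, IsIrredChar G θ → charInner G (χ ^ n) θ ≠ 0) :
    ∀ k : ℕ, n ≤ k →
      ∀ θ : G → ℂ, IsIrredChar G θ → charInner G (χ ^ k) θ ≠ 0 := by
  intro k hk
  induction k, hk using Nat.le_induction with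
  | base => exact h
  | succ k hk ih =>
    intro θ hθ
    obtain ⟨W, hWs, hWc⟩ := hθ
    obtain ⟨V, hV⟩ := hχ
    obtain ⟨U, hU⟩ := isChar_pow (⟨V, hV⟩ : IsChar G χ) (lt_of_lt_of_le hn hk)
    -- χ is not the zero function
    have hVfr : finrank ℂ V ≠ 0 := by
      intro h0
      apply h θ ⟨W, hWs, hWc⟩
      have : χ = 0 := by rw [hV]; exact char_zero_of_finrank_zero V h0
      rw [this, zero_pow hn.ne']
      unfold charInner
      simp
    set Xd := W ⊗ FDRep.of (Representation.dual V.ρ) with hXd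
    have hXchar : ∀ g : G, Xd.character g = W.character g * V.character g⁻¹ := by
      intro g
      rw [hXd, FDRep.char_tensor, Pi.mul_apply, FDRep.char_dual]
    have hkey : charInner G (χ ^ (k + 1)) θ = charInner G (χ ^ k) Xd.character := by
      unfold charInner
      congr 1
      apply Finset.sum_congr rfl
      intro g _
      rw [hXchar g, map_mul]
      have hc1 : (starRingEnd ℂ) (V.character g⁻¹) = V.character g := by
        rw [conj_character, inv_inv]
      rw [hc1, hWc]
      have : (χ ^ (k + 1)) g = (χ ^ k) g * χ g := by
        rw [pow_succ, Pi.mul_apply]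
      rw [this, hV]
      ring
    have hXpos : 0 < finrank ℂ Xd := by
      have h1 : Xd.character 1 = (finrank ℂ Xd : ℂ) := FDRep.char_one Xd
      have h2 : Xd.character 1 = (finrank ℂ W : ℂ) * (finrank ℂ V : ℂ) := by
        rw [hXchar 1, inv_one, FDRep.char_one, FDRep.char_one]
      have h3 : (finrank ℂ Xd : ℂ) ≠ 0 := by
        rw [← h1, h2]
        apply mul_ne_zero
        · exact_mod_cast (simple_finrank_pos W hWs).ne'
        · exact_mod_cast hVfr
      have : finrank ℂ Xd ≠ 0 := by exact_mod_cast h3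
      omega
    obtain ⟨Y, Z, hYs, hchar⟩ := exists_simple_decomp Xd hXpos
    have hsplit : charInner G (χ ^ k) Xd.character
        = charInner G (χ ^ k) Y.character + charInner G (χ ^ k) Z.character := by
      unfold charInner
      rw [← mul_add, ← Finset.sum_add_distrib]
      congr 1
      apply Finset.sum_congr rfl
      intro g _
      rw [hchar, Pi.add_apply, map_add, mul_add]
    obtain ⟨m1, hm1⟩ := charInner_exists_nat U Y
    obtain ⟨m2, hm2⟩ := charInner_exists_nat U Z
    rw [hU] at hsplit hkey
    have hm1pos : m1 ≠ 0 := by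
      intro hm0
      apply ih Y.character ⟨Y, hYs, rfl⟩
      rw [hU, hm1, hm0, Nat.cast_zero]
    rw [hkey, hsplit, hm1, hm2, ← Nat.cast_add]
    exact_mod_cast Nat.add_pos_left (Nat.pos_of_ne_zero hm1pos) m2 |>.ne'

/-- If every irreducible character of `G` is a constituent of `χ^n`, then the same holds for
`χ^k` for all `k ≥ n`. -/
theorem constituents_pow_mono (G : Type) [Group G] [Fintype G]
    (χ : G → ℂ) (hχ : IsChar G χ) (n : ℕ) (hn : 0 < n)
    (h : ∀ θ : G → ℂ, IsIrredChar G θ → charInner G (χ ^ n) θ ≠ 0) :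
    ∀ k : ℕ, n ≤ k →
      ∀ θ : G → ℂ, IsIrredChar G θ → charInner G (χ ^ k) θ ≠ 0 :=
  constituents_pow_mono' χ hχ n hn h
end
end

section
/- Let n > 4, let χ be the character of the standard representation of the symmetric group S_n, i.e., χ(g) = (number of fixed points of g on {1,…,n}) − 1, and let ζ be the sign character of S_n. Then for every integer k with 1 ≤ k ≤ n − 2, the inner product ⟨χ^k, ζ⟩ equals 0; in particular ζ is not a constituent of χ^k for any k ≤ n − 2. -/
open scoped ComplexOrder

noncomputable section

noncomputable section

/-- summand functions: `-1` for `none`, fixed-point indicator for `some i`. -/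
def auxA (n : ℕ) : Option (Fin n) → Equiv.Perm (Fin n) → ℂ :=
  fun x g => x.elim (-1) fun i => if g i = i then 1 else 0

lemma aux_inner_zero (n k : ℕ) (hk : k + 2 ≤ n) (f : Fin k → Option (Fin n)) :
    ∑ g : Equiv.Perm (Fin n),
      (∏ j : Fin k, auxA n (f j) g) * ((Equiv.Perm.sign g : ℤ) : ℂ) = 0 := by
  classical
  set t : Finset (Option (Fin n)) := insert none (Finset.univ.image f) with ht
  have h1 : t.card ≤ k + 1 := by
    calc t.card ≤ (Finset.univ.image f).card + 1 := Finset.card_insert_le _ _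
    _ ≤ k + 1 := by
        have := Finset.card_image_le (s := (Finset.univ : Finset (Fin k))) (f := f)
        simpa using Nat.add_le_add_right (by simpa using this) 1
  have hcard : 1 < (tᶜ : Finset (Option (Fin n))).card := by
    have h2 : (tᶜ : Finset (Option (Fin n))).card = Fintype.card (Option (Fin n)) - t.card :=
      Finset.card_compl t
    have h3 : Fintype.card (Option (Fin n)) = n + 1 := by simp
    omega
  obtain ⟨x, hx, y, hy, hxy⟩ := Finset.one_lt_card.mp hcard
  rw [Finset.mem_compl, ht, Finset.mem_insert] at hx hy
  push_neg at hx hy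
  obtain ⟨hxn, hxi⟩ := hx
  obtain ⟨hyn, hyi⟩ := hy
  obtain ⟨a, rfl⟩ := Option.ne_none_iff_exists'.mp hxn
  obtain ⟨b, rfl⟩ := Option.ne_none_iff_exists'.mp hyn
  have hab : a ≠ b := fun h => hxy (by rw [h])
  have hai : ∀ j, f j ≠ some a := by
    intro j h
    exact hxi (Finset.mem_image.mpr ⟨j, Finset.mem_univ j, h⟩)
  have hbi : ∀ j, f j ≠ some b := by
    intro j h
    exact hyi (Finset.mem_image.mpr ⟨j, Finset.mem_univ j, h⟩)
  set F : Equiv.Perm (Fin n) → ℂ :=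
    fun g => (∏ j : Fin k, auxA n (f j) g) * ((Equiv.Perm.sign g : ℤ) : ℂ) with hF
  have key : ∀ g, F (g * Equiv.swap a b) = -F g := by
    intro g
    have hprod : ∀ j : Fin k, auxA n (f j) (g * Equiv.swap a b) = auxA n (f j) g := by
      intro j
      cases hfj : f j with
      | none => rfl
      | some i =>
        have hia : i ≠ a := fun h => hai j (by rw [hfj, h])
        have hib : i ≠ b := fun h => hbi j (by rw [hfj, h])
        simp [auxA, Equiv.Perm.mul_apply, Equiv.swap_apply_of_ne_of_ne hia hib]
    have hsign : Equiv.Perm.sign (g * Equiv.swap a b) = -Equiv.Perm.sign g := by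
      rw [Equiv.Perm.sign_mul, Equiv.Perm.sign_swap hab, mul_neg_one]
    simp only [hF, Finset.prod_congr rfl (fun j _ => hprod j), hsign]
    push_cast
    ring
  have hsum : ∑ g : Equiv.Perm (Fin n), F g = ∑ g : Equiv.Perm (Fin n), -F g :=
    Fintype.sum_equiv (Equiv.mulRight (Equiv.swap a b)) F (fun g => -F g)
      (fun x => by have := key x; show F x = -F (x * Equiv.swap a b); linear_combination this)
  rw [Finset.sum_neg_distrib] at hsum
  exact add_self_eq_zero.mp (by linear_combination hsum)

/-- For `n > 4`, the standard character `χ(g) = #fix(g) - 1` of `S_n` satisfies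
`⟨χ^k, sign⟩ = 0` for all `1 ≤ k ≤ n - 2`. -/
theorem standard_character_pow_sign_inner_eq_zero (n : ℕ) (hn : 4 < n)
    (χ : Equiv.Perm (Fin n) → ℂ)
    (hχ : χ = fun g => ((Finset.univ.filter fun i : Fin n => g i = i).card : ℂ) - 1)
    (ζ : Equiv.Perm (Fin n) → ℂ)
    (hζ : ζ = fun g => ((Equiv.Perm.sign g : ℤ) : ℂ)) :
    ∀ k : ℕ, 1 ≤ k → k ≤ n - 2 →
      charInner (Equiv.Perm (Fin n)) (χ ^ k) ζ = 0 := by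
  classical
  intro k hk1 hk2
  have hk : k + 2 ≤ n := by omega
  have hchi : ∀ g : Equiv.Perm (Fin n), χ g = ∑ x : Option (Fin n), auxA n x g := by
    intro g
    rw [hχ]
    rw [Fintype.sum_option]
    simp only [auxA, Option.elim]
    rw [Finset.sum_boole]
    ring
  have hsum : ∑ g : Equiv.Perm (Fin n), (χ ^ k) g * (starRingEnd ℂ) (ζ g) = 0 := by
    have hpt : ∀ g : Equiv.Perm (Fin n), (χ ^ k) g * (starRingEnd ℂ) (ζ g)
        = ∑ f ∈ Fintype.piFinset (fun _ : Fin k => (Finset.univ : Finset (Option (Fin n)))),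
            (∏ j : Fin k, auxA n (f j) g) * ((Equiv.Perm.sign g : ℤ) : ℂ) := by
      intro g
      rw [Pi.pow_apply, hchi g, hζ]
      simp only [map_intCast]
      rw [← Finset.sum_mul]
      congr 1
      have : (∑ x : Option (Fin n), auxA n x g) ^ k
          = ∏ _j : Fin k, ∑ x : Option (Fin n), auxA n x g := by
        rw [Finset.prod_const, Finset.card_univ, Fintype.card_fin]
      rw [this, Finset.prod_univ_sum]
    rw [Finset.sum_congr rfl (fun g _ => hpt g), Finset.sum_comm]
    exact Finset.sum_eq_zero fun f _ => aux_inner_zero n k hk f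
  unfold charInner
  rw [hsum, mul_zero]
end
end
end

section
/- Let G be a finite group, let ρ be the character of the regular representation of G, let ζ be a linear character of G (a character with ζ(1) = 1), and let χ be an irreducible character of G with χ(1) > 1. Then for every irreducible character φ of G, ⟨(ρ − ζ)·χ, φ⟩ > 0; in particular every irreducible character of G is a constituent of the character (ρ − ζ)·χ. -/
open scoped ComplexOrder

noncomputable section

section Helpers

open Module Polynomial CategoryTheory

private lemma pow_apply_of_mem_eigenspace {V : Type*} [AddCommGroup V] [Module ℂ V]
    (f : Module.End ℂ V) (μ : ℂ) {x : V} (hx : x ∈ f.eigenspace μ) (k : ℕ) :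
    (f ^ k) x = μ ^ k • x := by
  induction k with
  | zero => simp
  | succ k ih =>
      rw [pow_succ', Module.End.mul_apply, ih, map_smul,
        Module.End.mem_eigenspace_iff.mp hx, smul_smul, ← pow_succ]

private lemma conj_trace_of_pow_eq_one {V : Type*} [AddCommGroup V] [Module ℂ V]
    [FiniteDimensional ℂ V] {f : Module.End ℂ V} {n : ℕ} (hn : 0 < n) (hf : f ^ n = 1) :
    (starRingEnd ℂ) (LinearMap.trace ℂ V f) = LinearMap.trace ℂ V (f ^ (n - 1)) := by
  classical
  have hsq : Squarefree (X ^ n - 1 : ℂ[X]) :=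
    (Polynomial.X_pow_sub_one_separable_iff.mpr (by exact_mod_cast hn.ne')).squarefree
  have haev : aeval f (X ^ n - 1 : ℂ[X]) = 0 := by simp [hf]
  have hss := Module.End.isSemisimple_of_squarefree_aeval_eq_zero hsq haev
  have htop : ⨆ μ : ℂ, f.eigenspace μ = ⊤ := by
    have h := f.iSup_maxGenEigenspace_eq_top
    simp_rw [hss.isFinitelySemisimple.maxGenEigenspace_eq_eigenspace] at h
    exact h
  have hind := f.eigenspaces_iSupIndep
  have hfin : {μ : ℂ | f.eigenspace μ ≠ ⊥}.Finite := Submodule.finite_ne_bot_of_iSupIndep hind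
  have hInt := DirectSum.isInternal_submodule_of_iSupIndep_of_iSup_eq_top hind htop
  have hmf : ∀ μ : ℂ, Set.MapsTo f (f.eigenspace μ) (f.eigenspace μ) := fun μ =>
    Module.End.mapsTo_genEigenspace_of_comm (Commute.refl f) μ 1
  have hmf' : ∀ μ : ℂ, Set.MapsTo (f ^ (n - 1)) (f.eigenspace μ) (f.eigenspace μ) := fun μ =>
    Module.End.mapsTo_genEigenspace_of_comm ((Commute.refl f).pow_right (n - 1)) μ 1
  have key : ∀ μ ∈ hfin.toFinset, μ ^ n = 1 := by
    intro μ hμ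
    rw [Set.Finite.mem_toFinset] at hμ
    obtain ⟨x, hx, hx0⟩ := (Submodule.ne_bot_iff _).mp hμ
    have h1 : (f ^ n) x = μ ^ n • x := pow_apply_of_mem_eigenspace f μ hx n
    rw [hf] at h1
    have h2 : (μ ^ n - 1) • x = 0 := by
      rw [sub_smul, one_smul, ← h1]
      simp
    rcases smul_eq_zero.mp h2 with h3 | h3
    · exact sub_eq_zero.mp h3
    · exact absurd h3 hx0
  have htr : ∀ (g : Module.End ℂ V)
      (hg : ∀ μ : ℂ, Set.MapsTo g (f.eigenspace μ) (f.eigenspace μ)) (c : ℂ → ℂ),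
      (∀ μ ∈ hfin.toFinset, ∀ x ∈ f.eigenspace μ, g x = c μ • x) →
      LinearMap.trace ℂ V g
        = ∑ μ ∈ hfin.toFinset, c μ * (finrank ℂ (f.eigenspace μ) : ℂ) := by
    intro g hg c hc
    rw [LinearMap.trace_eq_sum_trace_restrict' hInt hfin (fun μ => hg μ)]
    refine Finset.sum_congr rfl fun μ hμ => ?_
    have hres : g.restrict (hg μ) = (c μ) • (1 : Module.End ℂ (f.eigenspace μ)) := by
      ext x
      exact hc μ hμ x.1 x.2
    rw [hres, map_smul, LinearMap.trace_one, smul_eq_mul]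
  have hconj : ∀ μ : ℂ, μ ^ n = 1 → (starRingEnd ℂ) μ = μ ^ (n - 1) := by
    intro μ h
    have hμ0 : μ ≠ 0 := by
      intro h0
      rw [h0, zero_pow hn.ne'] at h
      exact zero_ne_one h
    have habs : ‖μ‖ = 1 := by
      have h1 : ‖μ‖ ^ n = 1 := by rw [← norm_pow, h, norm_one]
      have h0 : 0 ≤ ‖μ‖ := norm_nonneg _
      rcases lt_trichotomy (‖μ‖) 1 with hlt | heq | hgt
      · exact absurd h1 (ne_of_lt (pow_lt_one₀ h0 hlt hn.ne'))
      · exact heq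
      · exact absurd h1 (ne_of_gt (one_lt_pow₀ hgt hn.ne'))
    have hmc : μ * (starRingEnd ℂ) μ = 1 := by
      rw [Complex.mul_conj, Complex.normSq_eq_norm_sq, habs]
      norm_num
    have hmp : μ * μ ^ (n - 1) = 1 := by
      rw [← pow_succ', Nat.sub_add_cancel hn, h]
    exact mul_left_cancel₀ hμ0 (hmc.trans hmp.symm)
  rw [htr f hmf (fun μ => μ) (fun μ _ x hx => Module.End.mem_eigenspace_iff.mp hx),
    htr (f ^ (n - 1)) hmf' (fun μ => μ ^ (n - 1))
      (fun μ _ x hx => pow_apply_of_mem_eigenspace f μ hx (n - 1)),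
    map_sum]
  refine Finset.sum_congr rfl fun μ hμ => ?_
  rw [map_mul, hconj μ (key μ hμ), map_natCast]

private lemma conj_char {G : Type} [Group G] [Fintype G] (V : FDRep ℂ G) (g : G) :
    (starRingEnd ℂ) (V.character g) = V.character g⁻¹ := by
  have hn : 0 < orderOf g := orderOf_pos g
  have hf : (V.ρ g) ^ orderOf g = 1 := by
    rw [← map_pow, pow_orderOf_eq_one, map_one]
  have h2 : g ^ (orderOf g - 1) = g⁻¹ :=
    eq_inv_of_mul_eq_one_left
      (by rw [← pow_succ, Nat.sub_add_cancel hn, pow_orderOf_eq_one])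
  calc (starRingEnd ℂ) (V.character g)
      = LinearMap.trace ℂ V ((V.ρ g) ^ (orderOf g - 1)) := conj_trace_of_pow_eq_one hn hf
    _ = V.character g⁻¹ := by rw [← map_pow, h2]; rfl

private lemma sum_char_mul_conj_self {G : Type} [Group G] [Fintype G] (V : FDRep ℂ G)
    (hV : CategoryTheory.Simple V) :
    ∑ g : G, V.character g * (starRingEnd ℂ) (V.character g) = (Fintype.card G : ℂ) := by
  letI : Invertible (Fintype.card G : ℂ) :=
    invertibleOfNonzero (Nat.cast_ne_zero.mpr Fintype.card_ne_zero)
  haveI := hV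
  have h0 := FDRep.char_orthonormal (k := ℂ) (G := G) V V
  rw [if_pos ⟨Iso.refl V⟩] at h0
  have h : ⅟(Fintype.card G : ℂ) • ∑ g : G, V.character g * V.character g⁻¹ = 1 := by
    rw [invOf_eq_inv, smul_eq_mul, Fintype.card_eq_nat_card]; exact h0
  have h2 : ∑ g : G, V.character g * V.character g⁻¹ = (Fintype.card G : ℂ) := by
    calc ∑ g : G, V.character g * V.character g⁻¹
        = (Fintype.card G : ℂ) * (⅟(Fintype.card G : ℂ)
            • ∑ g : G, V.character g * V.character g⁻¹) := by
          rw [smul_eq_mul, ← mul_assoc, mul_invOf_self, one_mul]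
      _ = (Fintype.card G : ℂ) := by rw [h, mul_one]
  calc ∑ g : G, V.character g * (starRingEnd ℂ) (V.character g)
      = ∑ g : G, V.character g * V.character g⁻¹ :=
        Finset.sum_congr rfl fun g _ => by rw [conj_char]
    _ = (Fintype.card G : ℂ) := h2

private lemma sum_char_mul_conj_eq_card_mul_natCast {G : Type} [Group G] [Fintype G]
    (U W : FDRep ℂ G) :
    ∃ m : ℕ, ∑ g : G, U.character g * (starRingEnd ℂ) (W.character g)
      = (Fintype.card G : ℂ) * m := by
  letI : Invertible (Fintype.card G : ℂ) :=
    invertibleOfNonzero (Nat.cast_ne_zero.mpr Fintype.card_ne_zero)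
  refine ⟨Module.finrank ℂ (Representation.invariants
    ((FDRep.of (Representation.linHom W.ρ U.ρ)).ρ)), ?_⟩
  have h1 : ∀ g : G, U.character g * (starRingEnd ℂ) (W.character g)
      = (FDRep.of (Representation.linHom W.ρ U.ρ)).character g := by
    intro g
    rw [conj_char, FDRep.char_linHom, mul_comm]
  rw [Finset.sum_congr rfl fun g _ => h1 g]
  have h2 := FDRep.average_char_eq_finrank_invariants
    (FDRep.of (Representation.linHom W.ρ U.ρ))
  calc ∑ g : G, (FDRep.of (Representation.linHom W.ρ U.ρ)).character g
      = (Fintype.card G : ℂ) * (⅟(Fintype.card G : ℂ)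
          • ∑ g : G, (FDRep.of (Representation.linHom W.ρ U.ρ)).character g) := by
        rw [smul_eq_mul, ← mul_assoc, mul_invOf_self, one_mul]
    _ = _ := by rw [invOf_eq_inv, smul_eq_mul, Fintype.card_eq_nat_card, h2]

private lemma end_eq_trace_smul_one {V : Type*} [AddCommGroup V] [Module ℂ V]
    [FiniteDimensional ℂ V] (h : finrank ℂ V = 1) (f : Module.End ℂ V) :
    f = (LinearMap.trace ℂ V f) • 1 := by
  let b := finBasisOfFinrankEq ℂ V h
  have htr : LinearMap.trace ℂ V f = b.repr (f (b 0)) 0 := by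
    rw [LinearMap.trace_eq_matrix_trace ℂ b, Matrix.trace]
    simp [Matrix.diag, LinearMap.toMatrix_apply]
  refine b.ext fun i => ?_
  have h0 : i = 0 := Subsingleton.elim _ _
  subst h0
  have hrep := b.sum_repr (f (b 0))
  rw [Fin.sum_univ_one] at hrep
  rw [LinearMap.smul_apply, Module.End.one_apply, htr]
  exact hrep.symm

private lemma char_mul_conj_of_finrank_one {G : Type} [Group G] [Fintype G] (V : FDRep ℂ G)
    (h : finrank ℂ V = 1) (g : G) :
    V.character g * (starRingEnd ℂ) (V.character g) = 1 := by
  rw [conj_char]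
  have e1 : V.ρ g = V.character g • 1 := end_eq_trace_smul_one h (V.ρ g)
  have e2 : V.ρ g⁻¹ = V.character g⁻¹ • 1 := end_eq_trace_smul_one h (V.ρ g⁻¹)
  have hmul : (V.character g * V.character g⁻¹) • (1 : Module.End ℂ V) = 1 := by
    calc (V.character g * V.character g⁻¹) • (1 : Module.End ℂ V)
        = (V.character g • (1 : Module.End ℂ V)) * (V.character g⁻¹ • 1) := by
          rw [smul_mul_smul_comm, one_mul]
      _ = V.ρ g * V.ρ g⁻¹ := by rw [← e1, ← e2]
      _ = 1 := by rw [← map_mul, mul_inv_cancel, map_one]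
  haveI : Nontrivial V := Module.nontrivial_of_finrank_pos (R := ℂ) (by omega)
  obtain ⟨x, hx⟩ := exists_ne (0 : V)
  have hx2 := congrArg (fun f : Module.End ℂ V => f x) hmul
  simp only [LinearMap.smul_apply, Module.End.one_apply] at hx2
  have h1 : (V.character g * V.character g⁻¹) • x = (1 : ℂ) • x := by
    rw [one_smul]; exact hx2
  exact smul_left_injective ℂ hx h1

private lemma abs_char_of_finrank_one {G : Type} [Group G] [Fintype G] (V : FDRep ℂ G)
    (h : finrank ℂ V = 1) (g : G) : ‖V.character g‖ = 1 := by
  have h1 := char_mul_conj_of_finrank_one V h g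
  rw [Complex.mul_conj, Complex.normSq_eq_norm_sq] at h1
  have h2 : (‖V.character g‖) ^ 2 = 1 := by exact_mod_cast h1
  have h0 : 0 ≤ ‖V.character g‖ := norm_nonneg _
  nlinarith [sq_nonneg (‖V.character g‖ - 1),
    sq_nonneg (‖V.character g‖ + 1)]

private lemma sum_abs_sq_char {G : Type} [Group G] [Fintype G] (V : FDRep ℂ G)
    (hV : CategoryTheory.Simple V) :
    ∑ g : G, ‖V.character g‖ ^ 2 = (Fintype.card G : ℝ) := by
  have h := sum_char_mul_conj_self V hV
  have h2 : ((∑ g : G, ‖V.character g‖ ^ 2 : ℝ) : ℂ)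
      = ((Fintype.card G : ℝ) : ℂ) := by
    push_cast
    rw [← h]
    refine Finset.sum_congr rfl fun g _ => ?_
    rw [Complex.mul_conj, Complex.normSq_eq_norm_sq]
    norm_cast
  exact_mod_cast h2

end Helpers

open scoped CategoryTheory.MonoidalCategory

/-- If `ρ` is the regular character, `ζ` a linear character, and `χ` an irreducible
character with `χ(1) > 1`, then `⟨(ρ - ζ)χ, φ⟩ > 0` for every irreducible `φ`. -/
theorem regular_sub_linear_mul_nonlinear_full (G : Type) [Group G] [Fintype G] [DecidableEq G]
    (ρ : G → ℂ) (hρ : ρ = fun g => if g = 1 then (Fintype.card G : ℂ) else 0)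
    (ζ : G → ℂ) (hζ : IsChar G ζ) (hζ1 : ζ 1 = 1)
    (χ : G → ℂ) (hχ : IsIrredChar G χ) (hd : 1 < χ 1) :
    ∀ φ : G → ℂ, IsIrredChar G φ → 0 < charInner G ((ρ - ζ) * χ) φ := by
  classical
  obtain ⟨Vζ, hζc⟩ := hζ
  obtain ⟨Vχ, hχs, hχc⟩ := hχ
  intro φ hφ
  obtain ⟨Vφ, hφs, hφc⟩ := hφ
  subst hζc hχc hφc hρ
  have hcard0 : (0 : ℝ) < (Fintype.card G : ℝ) := by
    exact_mod_cast Fintype.card_pos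
  have hcard : (Fintype.card G : ℂ) ≠ 0 := Nat.cast_ne_zero.mpr Fintype.card_ne_zero
  set c : ℂ := (Fintype.card G : ℂ) with hc
  -- the linear character has a 1-dimensional representation
  have hζ1' : Module.finrank ℂ Vζ = 1 := by
    rw [FDRep.char_one, Nat.cast_eq_one] at hζ1
    exact hζ1
  set dχ := Module.finrank ℂ Vχ with hdχ
  set dφ := Module.finrank ℂ Vφ with hdφ
  have hχ1 : Vχ.character 1 = (dχ : ℂ) := by rw [FDRep.char_one]
  have hφ1 : Vφ.character 1 = (dφ : ℂ) := by rw [FDRep.char_one]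
  have hdχ2 : 2 ≤ dχ := by
    rw [hχ1] at hd
    have h1 : (1 : ℝ) < (dχ : ℝ) := by
      have := (Complex.lt_def.mp hd).1
      simpa using this
    exact_mod_cast Nat.succ_le_of_lt (by exact_mod_cast h1)
  have hdφ1 : 1 ≤ dφ := by
    by_contra hcon
    have h0 : dφ = 0 := by omega
    have hsub : Subsingleton Vφ := by
      have := Module.finrank_zero_iff (R := ℂ) (M := Vφ)
      exact this.mp h0
    have hzero : ∀ g : G, Vφ.character g = 0 := by
      intro g
      have : (Vφ.ρ g) = 0 := Subsingleton.elim _ _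
      simp [FDRep.character, this]
    have := sum_char_mul_conj_self Vφ hφs
    rw [Finset.sum_congr rfl (fun g _ => by rw [hzero g, zero_mul])] at this
    rw [Finset.sum_const_zero] at this
    exact hcard this.symm
  -- the multiplicity of φ in ζχ
  obtain ⟨m, hm⟩ := sum_char_mul_conj_eq_card_mul_natCast (Vζ ⊗ Vχ) Vφ
  have htens : ∀ g : G, (Vζ ⊗ Vχ).character g = Vζ.character g * Vχ.character g := by
    intro g
    rw [FDRep.char_tensor]
    rfl
  -- Cauchy–Schwarz bound : m ≤ 1
  have hζabs : ∀ g : G, ‖Vζ.character g‖ = 1 := abs_char_of_finrank_one Vζ hζ1'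
  have hCS : (Fintype.card G : ℝ) * m ≤ (Fintype.card G : ℝ) := by
    have hnorm : ‖(∑ g : G, (Vζ ⊗ Vχ).character g
        * (starRingEnd ℂ) (Vφ.character g))‖ = (Fintype.card G : ℝ) * m := by
      rw [hm]
      rw [norm_mul, Complex.norm_natCast, Complex.norm_natCast]
    have htri : ‖(∑ g : G, (Vζ ⊗ Vχ).character g
        * (starRingEnd ℂ) (Vφ.character g))‖
        ≤ ∑ g : G, ‖Vχ.character g‖ * ‖Vφ.character g‖ := by
      refine le_trans (norm_sum_le _ _) ?_
      refine Finset.sum_le_sum fun g _ => ?_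
      rw [htens g, norm_mul, norm_mul, Complex.norm_conj, hζabs g, one_mul]
    have hsχ := sum_abs_sq_char Vχ hχs
    have hsφ := sum_abs_sq_char Vφ hφs
    have hcs2 := Finset.sum_mul_sq_le_sq_mul_sq Finset.univ
      (fun g : G => ‖Vχ.character g‖) (fun g : G => ‖Vφ.character g‖)
    rw [hsχ, hsφ] at hcs2
    have hA0 : 0 ≤ ∑ g : G, ‖Vχ.character g‖ * ‖Vφ.character g‖ :=
      Finset.sum_nonneg fun g _ => mul_nonneg (norm_nonneg _) (norm_nonneg _)
    have hA : ∑ g : G, ‖Vχ.character g‖ * ‖Vφ.character g‖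
        ≤ (Fintype.card G : ℝ) := by nlinarith
    calc (Fintype.card G : ℝ) * m = _ := hnorm.symm
      _ ≤ _ := htri
      _ ≤ (Fintype.card G : ℝ) := hA
  have hm1 : (m : ℝ) ≤ 1 := by
    by_contra hcon
    push_neg at hcon
    have hlt : (Fintype.card G : ℝ) < (Fintype.card G : ℝ) * m := by nlinarith
    linarith
  -- compute the inner product
  have hval : charInner G (((fun g => if g = 1 then (Fintype.card G : ℂ) else 0)
        - Vζ.character) * Vχ.character) Vφ.character
      = (dχ : ℂ) * (dφ : ℂ) - (m : ℂ) := by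
    rw [charInner]
    have hsplit : ∑ g : G, ((((fun g => if g = 1 then (Fintype.card G : ℂ) else 0)
          - Vζ.character) * Vχ.character : G → ℂ)) g * (starRingEnd ℂ) (Vφ.character g)
        = (∑ g : G, (if g = 1 then (Fintype.card G : ℂ) else 0)
            * (Vχ.character g * (starRingEnd ℂ) (Vφ.character g)))
          - ∑ g : G, (Vζ ⊗ Vχ).character g * (starRingEnd ℂ) (Vφ.character g) := by
      rw [← Finset.sum_sub_distrib]
      refine Finset.sum_congr rfl fun g _ => ?_
      have hpt : ((((fun g => if g = 1 then (Fintype.card G : ℂ) else 0)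
            - Vζ.character) * Vχ.character : G → ℂ)) g
          = (if g = 1 then (Fintype.card G : ℂ) else 0) * Vχ.character g
            - Vζ.character g * Vχ.character g := by
        simp [Pi.mul_apply, Pi.sub_apply, sub_mul]
      rw [hpt, htens g]
      ring
    rw [hsplit, hm]
    have hfirst : ∑ g : G, (if g = 1 then (Fintype.card G : ℂ) else 0)
        * (Vχ.character g * (starRingEnd ℂ) (Vφ.character g))
        = (Fintype.card G : ℂ) * ((dχ : ℂ) * (dφ : ℂ)) := by
      rw [Finset.sum_eq_single (1 : G)]
      · rw [if_pos rfl, hχ1, hφ1, map_natCast]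
      · intro g _ hg
        rw [if_neg hg, zero_mul]
      · intro h
        exact absurd (Finset.mem_univ 1) h
    rw [hfirst, mul_sub, ← mul_assoc, inv_mul_cancel₀ hcard, one_mul, ← mul_assoc,
      inv_mul_cancel₀ hcard, one_mul]
  rw [hval]
  have hreal : (dχ : ℂ) * (dφ : ℂ) - (m : ℂ)
      = (((dχ : ℝ) * (dφ : ℝ) - (m : ℝ) : ℝ) : ℂ) := by
    push_cast
    ring
  rw [hreal, Complex.zero_lt_real]
  have h2 : (2 : ℝ) ≤ (dχ : ℝ) := by exact_mod_cast hdχ2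
  have h1 : (1 : ℝ) ≤ (dφ : ℝ) := by exact_mod_cast hdφ1
  nlinarith
end
end
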